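/- Let 0 < 3ε < 1, M₁, M₂ > 0, and let m ≥ 0 be an integer. Suppose h₁, h₂ : [0, ∞) × (ℤ³ \ {0}) → ℂ³ satisfy |h_i(s, k)| ≤ M_i |k|^{−(2 + 2ε)} exp(−(m + s)|k|²/2) for i = 1, 2, all s ∈ [0, 1], and all k ≠ 0. Then there exists a constant D > 0 depending only on ε such that for all t ∈ [0, 1] and all k ∈ ℤ³ \ {0}: |B(h₁, h₂)(t, k)| ≤ D M₁ M₂ exp(−(m + t)|k|²/4) (1 − exp(−t|k|²)) / |k|. -/

import Mathlib

noncomputable section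

open Real MeasureTheory

abbrev Z3 : Type := Fin 3 → ℤ
abbrev C3 : Type := EuclideanSpace ℂ (Fin 3)

/-- The integer vector `k` regarded as a vector in `ℝ³`. -/
def toR3 (k : Z3) : EuclideanSpace ℝ (Fin 3) := WithLp.toLp 2 (fun i => (k i : ℝ))

/-- The Euclidean norm of `k ∈ ℤ³`. -/
def znorm (k : Z3) : ℝ := ‖toR3 k‖

/-- The integer vector `k` regarded as a vector in `ℂ³`. -/
def toC3 (k : Z3) : C3 := WithLp.toLp 2 (fun i => (k i : ℂ))

/-- The bilinear dot product `⟨a, b⟩ = Σᵢ aᵢbᵢ` on `ℂ³` (no conjugation). -/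
def cdot (a b : C3) : ℂ := ∑ i, a i * b i

/-- The Leray projector `P_k x = x − (⟨k, x⟩/|k|²) k`. -/
def leray (k : Z3) (x : C3) : C3 := x - ((cdot (toC3 k) x) / ((znorm k : ℂ) ^ 2)) • toC3 k

/-- The Navier–Stokes bilinear operator
`B(f,g)(t,k) = 2πi ∫₀ᵗ e^{−(t−s)|k|²} Σ_{l ≠ 0, l ≠ k} ⟨k, f(s,k−l)⟩ P_k g(s,l) ds`. -/
def nsB (f g : ℝ → Z3 → C3) (t : ℝ) (k : Z3) : C3 :=
  (2 * (π : ℂ) * Complex.I) • ∫ s in (0:ℝ)..t,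
    Real.exp (-(t - s) * znorm k ^ 2) •
      ∑' l : Z3, if l ≠ 0 ∧ l ≠ k then cdot (toC3 k) (f s (k - l)) • leray k (g s l)
        else (0 : C3)

/-!
Each term of the convolution sum is at most `2 |k| |h₁(k - l)| |h₂(l)|`, since `P_k` has norm
at most `2`. For `a = 2 + 2ε ≥ 2` the algebraic weights satisfy
`|k - l|^{-a} |l|^{-a} ≤ (|k - l|^{-4} + |l|^{-4}) / 2`, so summing over `l` costs twice the
convergent lattice sum `Z = Σ_{l ≠ 0} |l|^{-4}`, while `|k - l|² + |l|² ≥ |k|² / 2` merges the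
Gaussians into `exp (-(m + s) |k|² / 4)`. The integrand is then bounded by
`2 Z M₁ M₂ |k| exp (-(m + t) |k|² / 4) exp (-(3/4) (t - s) |k|²)`, and integrating over
`s ∈ [0, t]` gives `D = 16 π Z / 3`, using `1 - exp (-(3/4) t |k|²) ≤ 1 - exp (-t |k|²)`.
-/

lemma znorm_nonneg (k : Z3) : 0 ≤ znorm k := norm_nonneg _

lemma one_le_znorm {k : Z3} (hk : k ≠ 0) : 1 ≤ znorm k := by
  obtain ⟨i, hi⟩ : ∃ i, k i ≠ 0 := Function.ne_iff.mp hk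
  calc (1 : ℝ) ≤ |(k i : ℝ)| := by exact_mod_cast Int.one_le_abs hi
    _ = ‖toR3 k i‖ := by simp [toR3]
    _ ≤ znorm k := PiLp.norm_apply_le _ i

lemma znorm_pos {k : Z3} (hk : k ≠ 0) : 0 < znorm k :=
  one_pos.trans_le (one_le_znorm hk)

lemma znorm_sq_le_two_mul_add (k l : Z3) :
    znorm k ^ 2 ≤ 2 * (znorm (k - l) ^ 2 + znorm l ^ 2) := by
  have hsplit : toR3 k = toR3 (k - l) + toR3 l := by
    ext i
    simp [toR3]
  have htri : znorm k ≤ znorm (k - l) + znorm l := by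
    simpa only [znorm, ← hsplit] using norm_add_le (toR3 (k - l)) (toR3 l)
  nlinarith [mul_self_le_mul_self (znorm_nonneg k) htri, sq_nonneg (znorm (k - l) - znorm l)]

lemma norm_toC3 (k : Z3) : ‖toC3 k‖ = znorm k := by
  simp [znorm, EuclideanSpace.norm_eq, toC3, toR3]

lemma norm_cdot_toC3_le (k : Z3) (x : C3) : ‖cdot (toC3 k) x‖ ≤ znorm k * ‖x‖ := by
  have hinner : cdot (toC3 k) x = inner ℂ (toC3 k) x := by
    simp [cdot, PiLp.inner_apply, toC3, mul_comm]
  rw [hinner, ← norm_toC3 k]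
  exact norm_inner_le_norm _ _

lemma norm_leray_le (k : Z3) (x : C3) : ‖leray k x‖ ≤ 2 * ‖x‖ := by
  have hproj : ‖cdot (toC3 k) x‖ / znorm k ^ 2 * znorm k ≤ ‖x‖ := by
    rcases (znorm_nonneg k).eq_or_lt with hk | hk
    · simp [← hk]
    · rw [div_mul_eq_mul_div, div_le_iff₀ (by positivity)]
      nlinarith [mul_le_mul_of_nonneg_right (norm_cdot_toC3_le k x) hk.le]
  have hcoef : ‖cdot (toC3 k) x / (znorm k : ℂ) ^ 2‖ = ‖cdot (toC3 k) x‖ / znorm k ^ 2 := by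
    rw [norm_div, norm_pow, Complex.norm_real, Real.norm_of_nonneg (znorm_nonneg k)]
  calc ‖leray k x‖ ≤ ‖x‖ + ‖cdot (toC3 k) x‖ / znorm k ^ 2 * znorm k := by
        rw [leray, ← hcoef, ← norm_toC3 k, ← norm_smul]
        exact norm_sub_le x _
    _ ≤ 2 * ‖x‖ := by linarith

lemma summable_znorm_rpow_neg {p : ℝ} (hp : 3 < p) : Summable fun l : Z3 => znorm l ^ (-p) := by
  let b := (EuclideanSpace.basisFun (Fin 3) ℝ).toBasis
  let bZ := b.restrictScalars ℤ
  have hrank : Module.finrank ℤ (Submodule.span ℤ (Set.range b)) = 3 := by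
    rw [Module.finrank_eq_card_basis bZ, Fintype.card_fin]
  have hlattice := ZLattice.summable_norm_rpow (Submodule.span ℤ (Set.range b)) (-p)
    (by rw [hrank]; push_cast; linarith)
  rw [← bZ.equivFun.symm.toEquiv.summable_iff] at hlattice
  refine hlattice.congr fun l => ?_
  simp only [Function.comp_apply, LinearEquiv.coe_toEquiv, Module.Basis.equivFun_symm_apply,
    Submodule.coe_norm, Submodule.coe_sum, Submodule.coe_smul, Module.Basis.restrictScalars_apply,
    bZ, znorm, toR3]
  congr 2
  ext i
  simp [b, Finset.sum_apply, Pi.single_apply]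

lemma rpow_neg_mul_rpow_neg_le {x y a : ℝ} (hx : 1 ≤ x) (hy : 1 ≤ y) (ha : 2 ≤ a) :
    x ^ (-a) * y ^ (-a) ≤ (x ^ (-4 : ℝ) + y ^ (-4 : ℝ)) / 2 := by
  have hdecay : ∀ z : ℝ, 1 ≤ z → z ^ (-a) ≤ z ^ (-2 : ℝ) := fun z hz =>
    Real.rpow_le_rpow_of_exponent_le hz (by linarith)
  have hsq : ∀ z : ℝ, 1 ≤ z → (z ^ (-2 : ℝ)) ^ 2 = z ^ (-4 : ℝ) := fun z hz => by
    rw [← Real.rpow_mul_natCast (by linarith)]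
    norm_num
  calc x ^ (-a) * y ^ (-a) ≤ x ^ (-2 : ℝ) * y ^ (-2 : ℝ) :=
        mul_le_mul (hdecay x hx) (hdecay y hy) (by positivity) (by positivity)
    _ ≤ ((x ^ (-2 : ℝ)) ^ 2 + (y ^ (-2 : ℝ)) ^ 2) / 2 := by
        nlinarith [sq_nonneg (x ^ (-2 : ℝ) - y ^ (-2 : ℝ))]
    _ = (x ^ (-4 : ℝ) + y ^ (-4 : ℝ)) / 2 := by rw [hsq x hx, hsq y hy]

lemma norm_cdot_smul_leray_le {k l : Z3} (hl : l ≠ 0) (hlk : l ≠ k) {u v : C3}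
    {a μ M₁ M₂ : ℝ} (ha : 2 ≤ a) (hμ : 0 ≤ μ) (hM₁ : 0 ≤ M₁) (hM₂ : 0 ≤ M₂)
    (hu : ‖u‖ ≤ M₁ * znorm (k - l) ^ (-a) * exp (-μ * znorm (k - l) ^ 2 / 2))
    (hv : ‖v‖ ≤ M₂ * znorm l ^ (-a) * exp (-μ * znorm l ^ 2 / 2)) :
    ‖cdot (toC3 k) u • leray k v‖ ≤ znorm k * M₁ * M₂ * exp (-μ * znorm k ^ 2 / 4)
      * (znorm (k - l) ^ (-4 : ℝ) + znorm l ^ (-4 : ℝ)) := by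
  have hweight := rpow_neg_mul_rpow_neg_le (one_le_znorm (sub_ne_zero.mpr hlk.symm))
    (one_le_znorm hl) ha
  have hgauss : exp (-μ * znorm (k - l) ^ 2 / 2) * exp (-μ * znorm l ^ 2 / 2)
      ≤ exp (-μ * znorm k ^ 2 / 4) := by
    rw [← exp_add, exp_le_exp]
    nlinarith [mul_le_mul_of_nonneg_left (znorm_sq_le_two_mul_add k l) hμ]
  have := znorm_nonneg k
  have := znorm_nonneg l
  have := znorm_nonneg (k - l)
  calc ‖cdot (toC3 k) u • leray k v‖ ≤ (znorm k * ‖u‖) * (2 * ‖v‖) := by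
        rw [norm_smul]
        exact mul_le_mul (norm_cdot_toC3_le k u) (norm_leray_le k v) (by positivity)
          (by positivity)
    _ ≤ (znorm k * (M₁ * znorm (k - l) ^ (-a) * exp (-μ * znorm (k - l) ^ 2 / 2)))
        * (2 * (M₂ * znorm l ^ (-a) * exp (-μ * znorm l ^ 2 / 2))) := by gcongr
    _ = 2 * znorm k * M₁ * M₂ * (znorm (k - l) ^ (-a) * znorm l ^ (-a))
        * (exp (-μ * znorm (k - l) ^ 2 / 2) * exp (-μ * znorm l ^ 2 / 2)) := by ring
    _ ≤ 2 * znorm k * M₁ * M₂ * ((znorm (k - l) ^ (-4 : ℝ) + znorm l ^ (-4 : ℝ)) / 2)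
        * exp (-μ * znorm k ^ 2 / 4) := by gcongr
    _ = _ := by ring

lemma norm_tsum_le_of_norm_le_sub_add {G E : Type*} [AddCommGroup G] [NormedAddCommGroup E]
    {F : G → E} {w : G → ℝ} (hw : Summable w) {C : ℝ} (k : G)
    (hF : ∀ l, ‖F l‖ ≤ C * (w (k - l) + w l)) :
    ‖∑' l, F l‖ ≤ 2 * C * ∑' l, w l := by
  have hw_sub : Summable fun l => w (k - l) := (Equiv.subLeft k).summable_iff.mpr hw
  have hshift : ∑' l, w (k - l) = ∑' l, w l := (Equiv.subLeft k).tsum_eq w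
  have hbound : Summable fun l => C * (w (k - l) + w l) := (hw_sub.add hw).mul_left C
  have hFsum : Summable fun l => ‖F l‖ := hbound.of_nonneg_of_le (fun _ => norm_nonneg _) hF
  calc ‖∑' l, F l‖ ≤ ∑' l, ‖F l‖ := norm_tsum_le_tsum_norm hFsum
    _ ≤ ∑' l, C * (w (k - l) + w l) := hFsum.tsum_le_tsum hF hbound
    _ = 2 * C * ∑' l, w l := by
        rw [tsum_mul_left, hw_sub.tsum_add hw, hshift]
        ring

def nsConv (f g : Z3 → C3) (k : Z3) : C3 :=
  ∑' l : Z3, if l ≠ 0 ∧ l ≠ k then cdot (toC3 k) (f (k - l)) • leray k (g l) else 0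

lemma norm_nsConv_le {k : Z3} {f g : Z3 → C3} {a μ M₁ M₂ : ℝ} (ha : 2 ≤ a)
    (hμ : 0 ≤ μ) (hM₁ : 0 ≤ M₁) (hM₂ : 0 ≤ M₂)
    (hf : ∀ l, l ≠ 0 → ‖f l‖ ≤ M₁ * znorm l ^ (-a) * exp (-μ * znorm l ^ 2 / 2))
    (hg : ∀ l, l ≠ 0 → ‖g l‖ ≤ M₂ * znorm l ^ (-a) * exp (-μ * znorm l ^ 2 / 2)) :
    ‖nsConv f g k‖ ≤ 2 * (∑' l : Z3, znorm l ^ (-4 : ℝ)) * znorm k * M₁ * M₂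
      * exp (-μ * znorm k ^ 2 / 4) := by
  refine (norm_tsum_le_of_norm_le_sub_add (C := znorm k * M₁ * M₂ * exp (-μ * znorm k ^ 2 / 4))
    (summable_znorm_rpow_neg (p := 4) (by norm_num)) k fun l => ?_).trans_eq (by ring)
  split_ifs with hl
  · exact norm_cdot_smul_leray_le hl.1 hl.2 ha hμ hM₁ hM₂
      (hf _ (sub_ne_zero.mpr (Ne.symm hl.2))) (hg l hl.1)
  · rw [norm_zero]
    have := znorm_nonneg k
    have := znorm_nonneg l
    have := znorm_nonneg (k - l)
    positivity

lemma integral_mul_exp_neg_mul_sub {A b t : ℝ} (hb : b ≠ 0) :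
    ∫ s in (0 : ℝ)..t, A * exp (-b * (t - s)) = A * (1 - exp (-b * t)) / b := by
  have hderiv : ∀ s : ℝ, HasDerivAt (fun s => A * exp (-b * (t - s)) / b)
      (A * exp (-b * (t - s))) s := fun s => by
    refine (((((hasDerivAt_id' s).const_sub t).const_mul (-b)).exp.const_mul A).div_const
      b).congr_deriv ?_
    field_simp
  rw [intervalIntegral.integral_eq_sub_of_hasDerivAt (fun s _ => hderiv s)
    ((by fun_prop : Continuous fun s => A * exp (-b * (t - s))).intervalIntegrable _ _)]
  simp only [sub_self, mul_zero, exp_zero, sub_zero]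
  ring

lemma norm_integral_le_of_norm_le_mul_exp {E : Type*} [NormedAddCommGroup E] [NormedSpace ℝ E]
    {F : ℝ → E} {A b t : ℝ} (hb : b ≠ 0) (ht : 0 ≤ t)
    (hF : ∀ s ∈ Set.Icc 0 t, ‖F s‖ ≤ A * exp (-b * (t - s))) :
    ‖∫ s in (0 : ℝ)..t, F s‖ ≤ A * (1 - exp (-b * t)) / b := by
  rw [← integral_mul_exp_neg_mul_sub hb]
  refine intervalIntegral.norm_integral_le_of_norm_le ht
    (Filter.Eventually.of_forall fun s hs => hF s (Set.Ioc_subset_Icc_self hs)) ?_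
  exact (by fun_prop : Continuous fun s => A * exp (-b * (t - s))).intervalIntegrable _ _

lemma norm_nsB_le_of_norm_nsConv_le {f g : ℝ → Z3 → C3} {k : Z3} {t C μ₀ : ℝ} (hk : k ≠ 0)
    (ht : 0 ≤ t)
    (hconv : ∀ s ∈ Set.Icc 0 t, ‖nsConv (f s) (g s) k‖ ≤ C * exp (-(μ₀ + s) * znorm k ^ 2 / 4)) :
    ‖nsB f g t k‖ ≤ 8 * π / 3 * C * exp (-(μ₀ + t) * znorm k ^ 2 / 4)
      * (1 - exp (-t * znorm k ^ 2)) / znorm k ^ 2 := by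
  have hk0 := znorm_pos hk
  have hC : 0 ≤ C := nonneg_of_mul_nonneg_left ((norm_nonneg _).trans (hconv t ⟨ht, le_rfl⟩))
    (exp_pos _)
  -- The heat factor `exp (-(t - s) |k|²)` pays for replacing `μ₀ + s` by `μ₀ + t` in the
  -- Gaussian, with `exp (-(3/4) (t - s) |k|²)` to spare.
  have hintegrand : ∀ s ∈ Set.Icc 0 t, ‖exp (-(t - s) * znorm k ^ 2) • nsConv (f s) (g s) k‖
      ≤ C * exp (-(μ₀ + t) * znorm k ^ 2 / 4) * exp (-(3 / 4 * znorm k ^ 2) * (t - s)) := by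
    intro s hs
    rw [norm_smul, Real.norm_of_nonneg (exp_pos _).le]
    calc _ ≤ exp (-(t - s) * znorm k ^ 2) * (C * exp (-(μ₀ + s) * znorm k ^ 2 / 4)) := by
          gcongr
          exact hconv s hs
      _ = _ := by
          rw [mul_left_comm, mul_assoc, ← exp_add, ← exp_add]
          ring_nf
  have hslower : exp (-t * znorm k ^ 2) ≤ exp (-(3 / 4 * znorm k ^ 2) * t) := by
    rw [exp_le_exp]
    nlinarith
  calc ‖nsB f g t k‖
      = 2 * π * ‖∫ s in (0 : ℝ)..t, exp (-(t - s) * znorm k ^ 2) • nsConv (f s) (g s) k‖ := by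
        simp [nsB, nsConv, norm_smul, pi_pos.le]
    _ ≤ 2 * π * (C * exp (-(μ₀ + t) * znorm k ^ 2 / 4)
          * (1 - exp (-(3 / 4 * znorm k ^ 2) * t)) / (3 / 4 * znorm k ^ 2)) := by
        gcongr
        exact norm_integral_le_of_norm_le_mul_exp (by positivity) ht hintegrand
    _ ≤ 2 * π * (C * exp (-(μ₀ + t) * znorm k ^ 2 / 4)
          * (1 - exp (-t * znorm k ^ 2)) / (3 / 4 * znorm k ^ 2)) := by
        gcongr
    _ = _ := by
        field_simp
        ring

theorem statement7_general (ε : ℝ) (hε : 0 < 3 * ε) :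
    ∃ D : ℝ, 0 < D ∧
      ∀ (M₁ M₂ : ℝ), 0 < M₁ → 0 < M₂ → ∀ (m : ℕ) (h₁ h₂ : ℝ → Z3 → C3),
        (∀ s ∈ Set.Icc (0 : ℝ) 1, ∀ k : Z3, k ≠ 0 →
          ‖h₁ s k‖ ≤ M₁ * znorm k ^ (-(2 + 2 * ε))
            * Real.exp (-((m : ℝ) + s) * znorm k ^ 2 / 2)) →
        (∀ s ∈ Set.Icc (0 : ℝ) 1, ∀ k : Z3, k ≠ 0 →
          ‖h₂ s k‖ ≤ M₂ * znorm k ^ (-(2 + 2 * ε))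
            * Real.exp (-((m : ℝ) + s) * znorm k ^ 2 / 2)) →
        ∀ t ∈ Set.Icc (0 : ℝ) 1, ∀ k : Z3, k ≠ 0 →
          ‖nsB h₁ h₂ t k‖ ≤ D * M₁ * M₂ * Real.exp (-((m : ℝ) + t) * znorm k ^ 2 / 4)
            * (1 - Real.exp (-t * znorm k ^ 2)) / znorm k := by
  set Z := ∑' l : Z3, znorm l ^ (-4 : ℝ)
  have hZ : 0 < Z := (summable_znorm_rpow_neg (by norm_num)).tsum_pos
    (fun l => rpow_nonneg (znorm_nonneg l) _) 1 (rpow_pos_of_pos (znorm_pos one_ne_zero) _)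
  refine ⟨16 * π / 3 * Z, by positivity, ?_⟩
  intro M₁ M₂ hM₁ hM₂ m h₁ h₂ hh₁ hh₂ t ⟨ht0, ht1⟩ k hk
  have hconv : ∀ s ∈ Set.Icc 0 t, ‖nsConv (h₁ s) (h₂ s) k‖
      ≤ 2 * Z * znorm k * M₁ * M₂ * exp (-((m : ℝ) + s) * znorm k ^ 2 / 4) := fun s hs =>
    have hs1 : s ∈ Set.Icc (0 : ℝ) 1 := ⟨hs.1, hs.2.trans ht1⟩
    norm_nsConv_le (by linarith) (by linarith [hs.1, m.cast_nonneg (α := ℝ)]) hM₁.le hM₂.le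
      (hh₁ s hs1) (hh₂ s hs1)
  refine (norm_nsB_le_of_norm_nsConv_le hk ht0 hconv).trans_eq ?_
  have := (znorm_pos hk).ne'
  field_simp
  ring

/-- Let `0 < 3ε < 1`.  There is a constant `D > 0` depending only on `ε` such
that: whenever `M₁, M₂ > 0`, `m ≥ 0` is an integer and `h₁, h₂` satisfy
`|hᵢ(s,k)| ≤ Mᵢ |k|^{−(2+2ε)} exp(−(m + s)|k|²/2)` for `i = 1, 2`, `s ∈ [0,1]`
and `k ≠ 0`, then for all `t ∈ [0, 1]` and `k ≠ 0`,
`|B(h₁,h₂)(t,k)| ≤ D M₁ M₂ exp(−(m + t)|k|²/4)(1 − exp(−t|k|²))/|k|`. -/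
theorem statement7 (ε : ℝ) (hε : 0 < 3 * ε) (hε1 : 3 * ε < 1) :
    ∃ D : ℝ, 0 < D ∧
      ∀ (M₁ M₂ : ℝ), 0 < M₁ → 0 < M₂ → ∀ (m : ℕ) (h₁ h₂ : ℝ → Z3 → C3),
        (∀ s ∈ Set.Icc (0 : ℝ) 1, ∀ k : Z3, k ≠ 0 →
          ‖h₁ s k‖ ≤ M₁ * znorm k ^ (-(2 + 2 * ε))
            * Real.exp (-((m : ℝ) + s) * znorm k ^ 2 / 2)) →
        (∀ s ∈ Set.Icc (0 : ℝ) 1, ∀ k : Z3, k ≠ 0 →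
          ‖h₂ s k‖ ≤ M₂ * znorm k ^ (-(2 + 2 * ε))
            * Real.exp (-((m : ℝ) + s) * znorm k ^ 2 / 2)) →
        ∀ t ∈ Set.Icc (0 : ℝ) 1, ∀ k : Z3, k ≠ 0 →
          ‖nsB h₁ h₂ t k‖ ≤ D * M₁ * M₂ * Real.exp (-((m : ℝ) + t) * znorm k ^ 2 / 4)
            * (1 - Real.exp (-t * znorm k ^ 2)) / znorm k :=
  statement7_general ε hε
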